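/- arXiv:2201.02185 — 4 statements merged into one kernel-verified Lean document; each statement's English description precedes it below -/
import Mathlib

section
/- Let r_0 ∈ ℝ, r_1,...,r_n ∈ ℝ, c > 0, with x* the unique solution of Σ_{i=1}^n max(r_i - x, 0) = x - r_0 + c. The modification δ_0 = (x* + c) - r_0 and δ_i = min(r_i, x*) - r_i minimizes the Euclidean norm √(Σ_{i=0}^n δ_i²) among all modifications (δ_0,...,δ_n) satisfying (r_0 + δ_0) - (r_i + δ_i) ≥ c for all i = 1,...,n. -/
/-- With `x` the unique solution of `∑ i, max (r i - x) 0 = x - r0 + c`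
(`c > 0`), the modification `δ0 = (x + c) - r0`, `δ i = min (r i) x - r i` is feasible
(creates a gap of at least `c` between the target action and every other action) and
minimizes the Euclidean norm `√(δ0² + ∑ i, δ i²)` among all feasible modifications. -/
theorem stmt2 (n : ℕ) (r : Fin n → ℝ) (r0 c : ℝ) (hc : 0 < c) (x : ℝ)
    (hx : ∑ i, max (r i - x) 0 = x - r0 + c) :
    (∀ i : Fin n,
      (r0 + ((x + c) - r0)) - (r i + (min (r i) x - r i)) ≥ c) ∧
    ∀ (d0 : ℝ) (δ : Fin n → ℝ),
      (∀ i : Fin n, (r0 + d0) - (r i + δ i) ≥ c) →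
      Real.sqrt (((x + c) - r0) ^ 2 + ∑ i, (min (r i) x - r i) ^ 2) ≤
        Real.sqrt (d0 ^ 2 + ∑ i, δ i ^ 2) := by
  constructor
  · intro i
    have h := min_le_right (r i) x
    linarith
  · intro d0 δ hfeas
    apply Real.sqrt_le_sqrt
    have hb : ∀ i : Fin n, min (r i) x - r i = -(max (r i - x) 0) := by
      intro i
      rcases le_total (r i) x with h | h
      · rw [min_eq_left h, max_eq_right (by linarith : r i - x ≤ 0)]; ring
      · rw [min_eq_right h, max_eq_left (by linarith : (0:ℝ) ≤ r i - x)]; ring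
    have hS : ∑ i, max (r i - x) 0 = x + c - r0 := by rw [hx]; ring
    have hkey : ∀ i : Fin n,
        0 ≤ max (r i - x) 0 * (d0 - δ i - (x + c - r0) - max (r i - x) 0) := by
      intro i
      rcases le_total (r i) x with h | h
      · rw [max_eq_right (by linarith : r i - x ≤ 0)]; ring_nf; simp
      · have hm : max (r i - x) 0 = r i - x := max_eq_left (by linarith)
        have hf := hfeas i
        rw [hm]
        nlinarith
    have hT : 0 ≤ ∑ i, max (r i - x) 0 * (d0 - δ i - (x + c - r0) - max (r i - x) 0) :=
      Finset.sum_nonneg fun i _ => hkey i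
    have hbig : ∑ i, ((min (r i) x - r i) ^ 2 +
          ((δ i - (min (r i) x - r i)) ^ 2 +
            2 * (max (r i - x) 0 * (d0 - δ i - (x + c - r0) - max (r i - x) 0)))) =
        ∑ i, (δ i ^ 2 + (2 * d0 - 2 * (x + c - r0)) * max (r i - x) 0) :=
      Finset.sum_congr rfl fun i _ => by rw [hb i]; ring
    rw [Finset.sum_add_distrib, Finset.sum_add_distrib, Finset.sum_add_distrib,
      ← Finset.mul_sum, ← Finset.mul_sum, hS] at hbig
    have hsq : 0 ≤ ∑ i, (δ i - (min (r i) x - r i)) ^ 2 :=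
      Finset.sum_nonneg fun i _ => sq_nonneg _
    nlinarith [sq_nonneg (d0 - (x + c - r0))]
end

section
/- Let A be a finite nonempty set of actions, A_adm ⊆ A nonempty, r : A → ℝ, and c > 0. For a target a† ∈ A_adm, define cost(a†) as the minimum over δ : A → ℝ of √(Σ_a δ(a)²) subject to (r(a†) + δ(a†)) - (r(a) + δ(a)) ≥ c for all a ≠ a†. Then cost is minimized over A_adm by a* ∈ argmax_{a ∈ A_adm} r(a), i.e., cost(a*) ≤ cost(a†) for every a† ∈ A_adm. -/
/-- The minimal L2-cost of a reward perturbation `δ : A → ℝ` forcing the target action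
`t` to dominate every other action by margin at least `c`. -/
noncomputable def forcingCost {A : Type*} [Fintype A] [DecidableEq A]
    (r : A → ℝ) (c : ℝ) (t : A) : ℝ :=
  sInf {v : ℝ | ∃ δ : A → ℝ,
    (∀ a : A, a ≠ t → (r t + δ t) - (r a + δ a) ≥ c) ∧
    v = Real.sqrt (∑ a, δ a ^ 2)}

/-- For a finite action set `A`, a nonempty admissible subset `Aadm`,
rewards `r : A → ℝ` and `c > 0`, the forcing cost over admissible target actions is
minimized by an admissible action `astar` of maximal original reward:
`forcingCost r c astar ≤ forcingCost r c t` for every admissible `t`. -/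
theorem stmt4 {A : Type*} [Fintype A] [DecidableEq A] [Nonempty A]
    (Aadm : Finset A) (hAadm : Aadm.Nonempty) (r : A → ℝ) (c : ℝ) (hc : 0 < c)
    (astar : A) (hstar : astar ∈ Aadm) (hmax : ∀ a ∈ Aadm, r a ≤ r astar) :
    ∀ t ∈ Aadm, forcingCost r c astar ≤ forcingCost r c t := by
  intro t ht
  by_cases hts : t = astar
  · subst hts; exact le_refl _
  have hrt : r t ≤ r astar := hmax t ht
  unfold forcingCost
  apply csInf_le_csInf
  · exact ⟨0, by rintro v ⟨δ, _, rfl⟩; exact Real.sqrt_nonneg _⟩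
  · refine ⟨Real.sqrt (∑ a, (if a = t then 0 else r t - r a - c) ^ 2),
      fun a => if a = t then 0 else r t - r a - c, fun a ha => ?_, rfl⟩
    simp [ha]; linarith
  · rintro v ⟨δ, hδ, rfl⟩
    refine ⟨fun a => δ (Equiv.swap astar t a), fun a ha => ?_, ?_⟩
    · simp only [Equiv.swap_apply_left]
      by_cases hat : a = t
      · subst hat
        simp only [Equiv.swap_apply_right]
        have h := hδ astar (Ne.symm hts)
        linarith
      · rw [Equiv.swap_apply_of_ne_of_ne ha hat]
        have h := hδ a hat
        linarith
    · congr 1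
      exact (Equiv.sum_comp (Equiv.swap astar t) (fun a => δ a ^ 2)).symm
end

section
/- Let Π_adm be a nonempty finite set of deterministic policies in a finite MDP and ε > 0. Then there exists a reward function R such that every ε-optimal deterministic policy under R lies in Π_adm, provided Π_adm = {π : π(s) ∈ A_adm(s) or μ^π(s) = 0 for all s} with each A_adm(s) nonempty; consequently the feasible set of the admissible policy teaching problem is nonempty and the infimum of ‖R̄ - R‖_2 - λ max_{π ∈ OPT^ε(R)} ρ^{π,R̄} over feasible R is attained. -/
open scoped BigOperators

/-- A finite Markov decision process with discount factor `γ ∈ [0,1)` and initial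
state distribution `init`. -/
structure MDP (S A : Type*) [Fintype S] [Fintype A] where
  P : S → A → S → ℝ
  init : S → ℝ
  γ : ℝ
  P_nonneg : ∀ s a s', 0 ≤ P s a s'
  P_sum : ∀ s a, ∑ s', P s a s' = 1
  init_nonneg : ∀ s, 0 ≤ init s
  init_sum : ∑ s, init s = 1
  γ_nonneg : 0 ≤ γ
  γ_lt_one : γ < 1

variable {S A : Type*} [Fintype S] [Fintype A]

/-- One-step evolution of a state distribution under policy `π`. -/
def MDP.step (M : MDP S A) (π : S → A) (d : S → ℝ) : S → ℝ :=
  fun s' => ∑ s, d s * M.P s (π s) s'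

/-- Distribution of the state `s_{t+1}` when executing `π` from `s_1 ~ init`. -/
def MDP.stateDist (M : MDP S A) (π : S → A) : ℕ → S → ℝ
  | 0 => M.init
  | t + 1 => M.step π (M.stateDist π t)

/-- Discounted state occupancy measure
`μ^π(s) = E[(1-γ) ∑_{t ≥ 1} γ^{t-1} 1{s_t = s}]`. -/
noncomputable def MDP.occ (M : MDP S A) (π : S → A) (s : S) : ℝ :=
  (1 - M.γ) * ∑' t : ℕ, M.γ ^ t * M.stateDist π t s

/-- The score `ρ^{π,R} = E[(1-γ) ∑_{t ≥ 1} γ^{t-1} R(s_t, a_t)]` of policy `π`. -/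
noncomputable def MDP.score (M : MDP S A) (π : S → A) (R : S → A → ℝ) : ℝ :=
  (1 - M.γ) * ∑' t : ℕ, M.γ ^ t * ∑ s, M.stateDist π t s * R s (π s)

/-- Distribution of the state `t+1` steps after taking action `a0` in state `s0`
and following `π` afterwards. -/
def MDP.stateDistFrom (M : MDP S A) (π : S → A) (s0 : S) (a0 : A) : ℕ → S → ℝ
  | 0 => M.P s0 a0
  | t + 1 => M.step π (M.stateDistFrom π s0 a0 t)

/-- State-action value
`Q^{π,R}(s,a) = E[∑_{t ≥ 1} γ^{t-1} R(s_t,a_t) | s_1 = s, a_1 = a, then follow π]`. -/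
noncomputable def MDP.Q (M : MDP S A) (π : S → A) (R : S → A → ℝ) (s : S) (a : A) : ℝ :=
  R s a + ∑' t : ℕ, M.γ ^ (t + 1) * ∑ s', M.stateDistFrom π s a t s' * R s' (π s')

/-- Euclidean (`L2`) distance between two reward functions. -/
noncomputable def rdist (R R' : S → A → ℝ) : ℝ :=
  Real.sqrt (∑ s, ∑ a, (R s a - R' s a) ^ 2)

/-- The set `OPT^ε_det(R)` of `ε`-optimal deterministic policies under reward `R`. -/
noncomputable def MDP.OPT (M : MDP S A) (R : S → A → ℝ) (ε : ℝ) : Set (S → A) :=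
  {π | M.score π R > (⨆ π' : S → A, M.score π' R) - ε}

/-- The set of admissible deterministic policies induced by per-state admissible action
sets: `π` must take an admissible action in every state it visits with positive
occupancy. -/
def admissiblePolicies (M : MDP S A) (Aadm : S → Set A) : Set (S → A) :=
  {π | ∀ s, π s ∈ Aadm s ∨ M.occ π s = 0}

/-- The objective `l(R)` of the admissible policy teaching problem P1 (worst case over
tie-breaking among `ε`-optimal policies). -/
noncomputable def lfun [DecidableEq S] (M : MDP S A) (Rbar : S → A → ℝ)
    (ε lam : ℝ) (R : S → A → ℝ) : ℝ :=
  ⨆ π : M.OPT R ε, (rdist Rbar R - lam * M.score π.1 Rbar)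

/-!
Feasibility: penalise every inadmissible action by a constant `c`. An admissible policy then
scores `0`, which is optimal, while a policy playing an inadmissible action at a state of
occupancy `μ > 0` scores at most `-c μ`; as there are finitely many pairs `(π, s)`, `c` can be
chosen with `c μ ≥ ε` for all of them.

Attainment: `ε`-optimality is a strict inequality between continuous functions of `R`, so
`OPT^ε(R)` can only grow under small perturbations of `R`. Hence the feasible set is closed and
the objective, a maximum over `OPT^ε(R)`, is lower semicontinuous. It is `‖R̄ - R‖₂` up to a
bounded error, hence coercive, so it attains its infimum on the feasible set.
-/

open Filter

section Minimization

variable {X : Type*} [TopologicalSpace X]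

theorem LowerSemicontinuous.exists_isMinOn_of_tendsto_cocompact {f : X → ℝ}
    (hf : LowerSemicontinuous f) {F : Set X} (hF : IsClosed F) (hne : F.Nonempty)
    (hlim : Tendsto f (cocompact X) atTop) : ∃ x ∈ F, IsMinOn f F x := by
  obtain ⟨x₀, hx₀⟩ := hne
  obtain ⟨K, hK, hKc⟩ := mem_cocompact.mp (hlim.eventually_gt_atTop (f x₀))
  have hKc : ∀ y ∉ K, f x₀ < f y := fun y hy => hKc hy
  have hx₀K : x₀ ∈ K := by_contra fun h => (hKc x₀ h).false
  obtain ⟨x, ⟨hxF, -⟩, hmin⟩ := LowerSemicontinuousOn.exists_isMinOn (s := F ∩ K)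
    ⟨x₀, hx₀, hx₀K⟩ (hK.inter_left hF) (hf.lowerSemicontinuousOn _)
  refine ⟨x, hxF, fun y hy => ?_⟩
  by_cases hyK : y ∈ K
  · exact hmin ⟨hy, hyK⟩
  · exact (hmin ⟨hx₀, hx₀K⟩).trans (hKc y hyK).le

theorem lowerSemicontinuous_ciSup_of_isOpen {ι : Type*} [Finite ι] {U : X → Set ι}
    (hU : ∀ i, IsOpen {x | i ∈ U x}) (hne : ∀ x, (U x).Nonempty) {g : X → ι → ℝ}
    (hg : ∀ i, LowerSemicontinuous fun x => g x i) :
    LowerSemicontinuous fun x => ⨆ i : U x, g x i := by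
  intro x y hy
  have := (hne x).to_subtype
  obtain ⟨⟨i, hi⟩, hyi⟩ := exists_lt_of_lt_ciSup hy
  filter_upwards [(hU i).mem_nhds hi, hg i x y hyi] with x' hix' hyx'
  exact hyx'.trans_le
    (le_ciSup (f := fun j : U x' => g x' j) (Set.finite_range _).bddAbove ⟨i, hix'⟩)

end Minimization

namespace MDP

variable (M : MDP S A)

theorem stateDist_nonneg (π : S → A) : ∀ t s, 0 ≤ M.stateDist π t s
  | 0, s => M.init_nonneg s
  | t + 1, s => Finset.sum_nonneg fun s' _ =>
      mul_nonneg (stateDist_nonneg π t s') (M.P_nonneg s' (π s') s)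

theorem sum_stateDist (π : S → A) : ∀ t, ∑ s, M.stateDist π t s = 1
  | 0 => M.init_sum
  | t + 1 => by
      simp only [stateDist, step]
      rw [Finset.sum_comm]
      simp only [← Finset.mul_sum, M.P_sum, mul_one]
      exact sum_stateDist π t

theorem stateDist_le_one (π : S → A) (t : ℕ) (s : S) : M.stateDist π t s ≤ 1 :=
  M.sum_stateDist π t ▸
    Finset.single_le_sum (fun s _ => M.stateDist_nonneg π t s) (Finset.mem_univ s)

theorem summable_pow_mul_stateDist (π : S → A) (s : S) :
    Summable fun t => M.γ ^ t * M.stateDist π t s :=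
  (summable_geometric_of_lt_one M.γ_nonneg M.γ_lt_one).of_nonneg_of_le
    (fun t => mul_nonneg (pow_nonneg M.γ_nonneg t) (M.stateDist_nonneg π t s))
    (fun t => mul_le_of_le_one_right (pow_nonneg M.γ_nonneg t) (M.stateDist_le_one π t s))

theorem occ_nonneg (π : S → A) (s : S) : 0 ≤ M.occ π s :=
  mul_nonneg (sub_nonneg.mpr M.γ_lt_one.le) (tsum_nonneg fun t =>
    mul_nonneg (pow_nonneg M.γ_nonneg t) (M.stateDist_nonneg π t s))

theorem score_eq_sum_occ_mul (π : S → A) (R : S → A → ℝ) :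
    M.score π R = ∑ s, M.occ π s * R s (π s) := by
  simp only [score, occ, Finset.mul_sum, ← mul_assoc]
  rw [Summable.tsum_finsetSum fun s _ => (M.summable_pow_mul_stateDist π s).mul_right _,
    Finset.mul_sum]
  refine Finset.sum_congr rfl fun s _ => ?_
  rw [tsum_mul_right, mul_assoc]

theorem continuous_score (π : S → A) : Continuous fun R : S → A → ℝ => M.score π R := by
  simp only [score_eq_sum_occ_mul]
  fun_prop

theorem mem_OPT_iff {R : S → A → ℝ} {ε : ℝ} {π : S → A} :
    π ∈ M.OPT R ε ↔ ∀ π', M.score π' R < M.score π R + ε := by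
  have : Nonempty (S → A) := ⟨π⟩
  obtain ⟨πmax, hπmax⟩ := exists_eq_ciSup_of_finite (f := fun π' => M.score π' R)
  change _ - ε < _ ↔ _
  rw [sub_lt_iff_lt_add, ← hπmax]
  exact ⟨fun h π' => (le_ciSup (Set.finite_range _).bddAbove π').trans_lt (hπmax ▸ h),
    fun h => h πmax⟩

theorem isOpen_setOf_mem_OPT (ε : ℝ) (π : S → A) : IsOpen {R | π ∈ M.OPT R ε} := by
  simp only [mem_OPT_iff, Set.ofPred_forall]
  exact isOpen_iInter_of_finite fun π' =>
    isOpen_lt (M.continuous_score π') ((M.continuous_score π).add continuous_const)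

theorem isClosed_setOf_OPT_subset (ε : ℝ) (T : Set (S → A)) :
    IsClosed {R | M.OPT R ε ⊆ T} := by
  simp only [Set.subset_def, Set.ofPred_forall]
  refine isClosed_iInter fun π => ?_
  by_cases hπ : π ∈ T
  · simp [hπ]
  · simp only [hπ, imp_false]
    exact (M.isOpen_setOf_mem_OPT ε π).isClosed_compl

theorem OPT_nonempty [Nonempty (S → A)] (R : S → A → ℝ) {ε : ℝ} (hε : 0 < ε) :
    (M.OPT R ε).Nonempty := by
  obtain ⟨π, hπ⟩ := exists_eq_ciSup_of_finite (f := fun π' => M.score π' R)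
  exact ⟨π, show _ - ε < _ by rw [← hπ]; linarith⟩

end MDP

open Classical in
noncomputable def penaltyReward {S A : Type*} (Aadm : S → Set A) (c : ℝ) (s : S) (a : A) :
    ℝ :=
  if a ∈ Aadm s then 0 else -c

namespace MDP

variable (M : MDP S A) {Aadm : S → Set A} {c : ℝ}

theorem score_penaltyReward_of_forall_mem {π : S → A} (hπ : ∀ s, π s ∈ Aadm s) :
    M.score π (penaltyReward Aadm c) = 0 := by
  simp [score_eq_sum_occ_mul, penaltyReward, hπ]

theorem score_penaltyReward_le (hc : 0 ≤ c) {π : S → A} {s : S} (hs : π s ∉ Aadm s) :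
    M.score π (penaltyReward Aadm c) ≤ -(c * M.occ π s) := by
  calc M.score π (penaltyReward Aadm c)
      ≤ ∑ s' ∈ {s}, M.occ π s' * penaltyReward Aadm c s' (π s') := by
        rw [score_eq_sum_occ_mul]
        refine Finset.sum_le_sum_of_subset_of_nonpos' (Finset.subset_univ _) fun s' _ _ => ?_
        exact mul_nonpos_of_nonneg_of_nonpos (M.occ_nonneg π s')
          (by unfold penaltyReward; split_ifs <;> linarith)
    _ = -(c * M.occ π s) := by simp [penaltyReward, hs, mul_comm]

theorem exists_OPT_subset_admissiblePolicies (hA : ∀ s, (Aadm s).Nonempty) {ε : ℝ}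
    (hε : 0 < ε) : ∃ R, M.OPT R ε ⊆ admissiblePolicies M Aadm := by
  choose πadm hπadm using hA
  obtain ⟨c, hc⟩ := (Set.finite_range fun p : (S → A) × S => ε / M.occ p.1 p.2).bddAbove
  refine ⟨penaltyReward Aadm c, fun π hπ s => or_iff_not_imp_right.mpr fun hocc => ?_⟩
  by_contra hs
  have hocc : 0 < M.occ π s := (M.occ_nonneg π s).lt_of_ne' hocc
  have hεc : ε ≤ c * M.occ π s := (div_le_iff₀ hocc).mp (hc ⟨(π, s), rfl⟩)
  have hc0 : 0 ≤ c := nonneg_of_mul_nonneg_left (hε.le.trans hεc) hocc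
  have := (M.mem_OPT_iff.mp hπ) πadm
  rw [M.score_penaltyReward_of_forall_mem hπadm] at this
  linarith [M.score_penaltyReward_le hc0 hs]

end MDP

theorem dist_le_rdist (R R' : S → A → ℝ) : dist R R' ≤ rdist R R' := by
  refine dist_pi_le_iff (Real.sqrt_nonneg _) |>.mpr fun s => ?_
  refine dist_pi_le_iff (Real.sqrt_nonneg _) |>.mpr fun a => ?_
  rw [Real.dist_eq]
  refine Real.abs_le_sqrt ?_
  calc (R s a - R' s a) ^ 2 ≤ ∑ a', (R s a' - R' s a') ^ 2 :=
        Finset.single_le_sum (f := fun a' => (R s a' - R' s a') ^ 2)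
          (fun a' _ => sq_nonneg _) (Finset.mem_univ a)
    _ ≤ ∑ s', ∑ a', (R s' a' - R' s' a') ^ 2 :=
        Finset.single_le_sum (f := fun s' => ∑ a', (R s' a' - R' s' a') ^ 2)
          (fun s' _ => Finset.sum_nonneg fun a' _ => sq_nonneg _) (Finset.mem_univ s)

theorem continuous_rdist (R : S → A → ℝ) : Continuous (rdist R) := by
  unfold rdist
  fun_prop

theorem tendsto_rdist_cocompact_atTop (R : S → A → ℝ) :
    Tendsto (rdist R) (cocompact _) atTop :=
  tendsto_atTop_mono (dist_le_rdist R) (tendsto_dist_left_cocompact_atTop R)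

section Objective

variable [DecidableEq S] (M : MDP S A) (Rbar : S → A → ℝ) {ε : ℝ} (lam : ℝ)

theorem le_lfun {R : S → A → ℝ} {π : S → A} (hπ : π ∈ M.OPT R ε) :
    rdist Rbar R - lam * M.score π Rbar ≤ lfun M Rbar ε lam R :=
  le_ciSup (f := fun π : M.OPT R ε => rdist Rbar R - lam * M.score π.1 Rbar)
    (Set.finite_range _).bddAbove ⟨π, hπ⟩

variable [Nonempty (S → A)] (hε : 0 < ε)
include hε

theorem lowerSemicontinuous_lfun : LowerSemicontinuous (lfun M Rbar ε lam) :=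
  lowerSemicontinuous_ciSup_of_isOpen (g := fun R π => rdist Rbar R - lam * M.score π Rbar)
    (M.isOpen_setOf_mem_OPT ε) (M.OPT_nonempty · hε) fun _ =>
      ((continuous_rdist Rbar).sub continuous_const).lowerSemicontinuous

theorem tendsto_lfun_cocompact_atTop : Tendsto (lfun M Rbar ε lam) (cocompact _) atTop := by
  obtain ⟨C, hC⟩ := (Set.finite_range fun π => lam * M.score π Rbar).bddAbove
  refine tendsto_atTop_mono (fun R => ?_)
    (tendsto_atTop_add_const_right _ (-C) (tendsto_rdist_cocompact_atTop Rbar))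
  obtain ⟨π, hπ⟩ := M.OPT_nonempty R hε
  linarith [le_lfun M Rbar lam hπ, hC ⟨π, rfl⟩]

end Objective

theorem stmt10_general [DecidableEq S] (M : MDP S A) (Rbar : S → A → ℝ)
    (ε lam : ℝ) (hε : 0 < ε)
    (Aadm : S → Set A) (hA : ∀ s, (Aadm s).Nonempty) :
    ∃ R : S → A → ℝ, M.OPT R ε ⊆ admissiblePolicies M Aadm ∧
      ∀ R' : S → A → ℝ, M.OPT R' ε ⊆ admissiblePolicies M Aadm →
        lfun M Rbar ε lam R ≤ lfun M Rbar ε lam R' := by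
  have : Nonempty (S → A) := ⟨fun s => (hA s).some⟩
  obtain ⟨R, hR, hmin⟩ :=
    (lowerSemicontinuous_lfun M Rbar lam hε).exists_isMinOn_of_tendsto_cocompact
      (M.isClosed_setOf_OPT_subset ε (admissiblePolicies M Aadm))
      (M.exists_OPT_subset_admissiblePolicies hA hε) (tendsto_lfun_cocompact_atTop M Rbar lam hε)
  exact ⟨R, hR, fun R' hR' => hmin hR'⟩

/-- Proposition 1: If every per-state admissible action set is nonempty,
then there exists a reward function `R` such that every `ε`-optimal deterministic policy
under `R` is admissible; consequently the feasible set of the admissible policy teaching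
problem P1 is nonempty, and the infimum of the objective over feasible reward functions
is attained. -/
theorem stmt10 [DecidableEq S] [Nonempty A] (M : MDP S A) (Rbar : S → A → ℝ)
    (ε lam : ℝ) (hε : 0 < ε) (hlam : 0 ≤ lam)
    (Aadm : S → Set A) (hA : ∀ s, (Aadm s).Nonempty) :
    ∃ R : S → A → ℝ, M.OPT R ε ⊆ admissiblePolicies M Aadm ∧
      ∀ R' : S → A → ℝ, M.OPT R' ε ⊆ admissiblePolicies M Aadm →
        lfun M Rbar ε lam R ≤ lfun M Rbar ε lam R' :=
  stmt10_general M Rbar ε lam hε Aadm hA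
end

section
/- Let f(x) = x - r_0 + c - Σ_{i=1}^n max(r_i - x, 0) with c > 0, and x* its unique root. Then x* + c ≥ r_0, i.e., the target action's reward is never decreased by the optimal modification of Theorem 4, and x* ≤ max(r_0 - c, r_1, ..., r_n) + c. -/
/-- If `x` is the root of `f x = x - r0 + c - ∑ i, max (r i - x) 0` with
`c > 0`, then `x + c ≥ r0` (the target action's reward is never decreased by the optimal
modification), and `x ≤ max (r0 - c) (r 1) ... (r n) + c`. -/
theorem stmt19 (n : ℕ) (r : Fin n → ℝ) (r0 c x M : ℝ) (hc : 0 < c)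
    (hx : ∑ i, max (r i - x) 0 = x - r0 + c)
    (hM : IsGreatest (insert (r0 - c) (Set.range r)) M) :
    r0 ≤ x + c ∧ x ≤ M + c := by
  have hsum : 0 ≤ ∑ i, max (r i - x) 0 :=
    Finset.sum_nonneg fun i _ => le_max_right _ _
  constructor
  · linarith [hx ▸ hsum]
  · by_contra h
    push_neg at h
    have hz : ∀ i, max (r i - x) 0 = 0 := by
      intro i
      have : r i ≤ M := hM.2 (Set.mem_insert_of_mem _ ⟨i, rfl⟩)
      have : r i - x ≤ 0 := by linarith
      simp [max_eq_right this]
    rw [Finset.sum_eq_zero fun i _ => hz i] at hx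
    have : r0 - c ≤ M := hM.2 (Set.mem_insert _ _)
    linarith
end
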